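/- Let T be a binary tree, B a dBUTA, and (v,q) a useful configuration with v having left child v1 and right child v2 and label f. Then S^u(v,q) equals the disjoint union, over all tuples (v1,q1,v2,q2) with (v1,q1) and (v2,q2) active and δ2(q1,q2,f)=q, of the sets { B1 ∪ B2 : B1 ∈ S^a(v1,q1), B2 ∈ S^a(v2,q2) }; moreover each such B1 ∪ B2 determines B1 and B2 uniquely (B1 = (B1∪B2) ∩ leaves(T(v1)), B2 = (B1∪B2) ∩ leaves(T(v2))). -/
import Mathlib


/-- Vertex-labelled binary trees: leaves labelled `σ0`, internal vertices `σ2`. -/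
inductive BTree (σ0 σ2 : Type*) where
  | leaf : σ0 → BTree σ0 σ2
  | node : σ2 → BTree σ0 σ2 → BTree σ0 σ2 → BTree σ0 σ2

/-- Subtree at a position (word over `{ℓ,r}`, `false` = left, `true` = right). -/
def subtreeAt {σ0 σ2 : Type*} : BTree σ0 σ2 → List Bool → Option (BTree σ0 σ2)
  | t, [] => some t
  | BTree.leaf _, _ :: _ => none
  | BTree.node _ l r, d :: ds => subtreeAt (if d then r else l) ds

open scoped Classical in
/-- The state of the dBUTA `(δ0, δ2)` on a tree sitting at absolute position `p`, where
the selection `S` (a set of absolute leaf positions) marks leaves with `1`. -/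
noncomputable def run {σ0 σ2 Q : Type*} (δ0 : σ0 → Bool → Q) (δ2 : Q → Q → σ2 → Q)
    (S : Set (List Bool)) : BTree σ0 σ2 → List Bool → Q
  | BTree.leaf a, p => δ0 a (if p ∈ S then true else false)
  | BTree.node f l r, p =>
      δ2 (run δ0 δ2 S l (p ++ [false])) (run δ0 δ2 S r (p ++ [true])) f

/-- The leaves of the subtree `T(p)`, as absolute positions of `T`. -/
def LeavesBelow {σ0 σ2 : Type*} (T : BTree σ0 σ2) (p : List Bool) : Set (List Bool) :=
  {w | p <+: w ∧ ∃ a, subtreeAt T w = some (BTree.leaf a)}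

/-- `S^a(v,q)`: the nonempty leaf selections `S` of `T(v)` with `B(T(v),S) = q`. -/
def Sa {σ0 σ2 Q : Type*} (δ0 : σ0 → Bool → Q) (δ2 : Q → Q → σ2 → Q)
    (T : BTree σ0 σ2) (p : List Bool) (q : Q) : Set (Set (List Bool)) :=
  {S | S.Nonempty ∧ S ⊆ LeavesBelow T p ∧
    ∃ t, subtreeAt T p = some t ∧ run δ0 δ2 S t p = q}

/-- `(v,q) ∈ Conf^∅(T)`: the empty selection evaluates to `q` on `T(v)`. -/
def ConfEmpty {σ0 σ2 Q : Type*} (δ0 : σ0 → Bool → Q) (δ2 : Q → Q → σ2 → Q)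
    (T : BTree σ0 σ2) (p : List Bool) (q : Q) : Prop :=
  ∃ t, subtreeAt T p = some t ∧ run δ0 δ2 (∅ : Set (List Bool)) t p = q

/-- `(v,q)` is an active configuration. -/
def ConfA {σ0 σ2 Q : Type*} (δ0 : σ0 → Bool → Q) (δ2 : Q → Q → σ2 → Q)
    (T : BTree σ0 σ2) (p : List Bool) (q : Q) : Prop :=
  (Sa δ0 δ2 T p q).Nonempty

/-- `S^u(v,q)`: the selections in `S^a(v,q)` hitting the leaves of every child of `v`. -/
def Su {σ0 σ2 Q : Type*} (δ0 : σ0 → Bool → Q) (δ2 : Q → Q → σ2 → Q)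
    (T : BTree σ0 σ2) (p : List Bool) (q : Q) : Set (Set (List Bool)) :=
  {S | S ∈ Sa δ0 δ2 T p q ∧
    ∀ d : Bool, (subtreeAt T (p ++ [d])).isSome →
      (S ∩ LeavesBelow T (p ++ [d])).Nonempty}

/-- `(v,q)` is a useful configuration. -/
def ConfU {σ0 σ2 Q : Type*} (δ0 : σ0 → Bool → Q) (δ2 : Q → Q → σ2 → Q)
    (T : BTree σ0 σ2) (p : List Bool) (q : Q) : Prop :=
  (Su δ0 δ2 T p q).Nonempty


lemma subtreeAt_append {σ0 σ2 : Type*} (T : BTree σ0 σ2) (p q : List Bool) :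
    subtreeAt T (p ++ q) = (subtreeAt T p).bind (fun t => subtreeAt t q) := by
  induction p generalizing T with
  | nil => simp [subtreeAt]
  | cons d ds ih =>
    cases T with
    | leaf a => simp [subtreeAt]
    | node f l r =>
      simp only [List.cons_append, subtreeAt]
      exact ih _

lemma run_congr {σ0 σ2 Q : Type*} (δ0 : σ0 → Bool → Q) (δ2 : Q → Q → σ2 → Q)
    (t : BTree σ0 σ2) (p : List Bool) (S S' : Set (List Bool))
    (h : ∀ u a, subtreeAt t u = some (BTree.leaf a) → (p ++ u ∈ S ↔ p ++ u ∈ S')) :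
    run δ0 δ2 S t p = run δ0 δ2 S' t p := by
  induction t generalizing p with
  | leaf a =>
    have := h [] a rfl
    simp only [List.append_nil] at this
    simp only [run]
    congr 1
    exact decide_eq_decide.mpr this
  | node f l r ihl ihr =>
    simp only [run]
    rw [ihl (p ++ [false]) fun u a hu => by
        have := h (false :: u) a (by simpa [subtreeAt] using hu)
        simpa [List.append_assoc] using this,
      ihr (p ++ [true]) fun u a hu => by
        have := h (true :: u) a (by simpa [subtreeAt] using hu)
        simpa [List.append_assoc] using this]

lemma leaves_disj {σ0 σ2 : Type*} (T : BTree σ0 σ2) (p : List Bool) :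
    LeavesBelow T (p ++ [false]) ∩ LeavesBelow T (p ++ [true]) = ∅ := by
  ext w
  simp only [Set.mem_inter_iff, Set.mem_empty_iff_false, iff_false]
  rintro ⟨⟨⟨s, rfl⟩, -⟩, ⟨hpre, -⟩⟩
  rw [List.append_assoc, List.prefix_append_right_inj] at hpre
  obtain ⟨s', hs'⟩ := hpre
  simp at hs'

lemma leaves_child_subset {σ0 σ2 : Type*} (T : BTree σ0 σ2) (p : List Bool) (d : Bool) :
    LeavesBelow T (p ++ [d]) ⊆ LeavesBelow T p := by
  rintro w ⟨hpre, ha⟩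
  exact ⟨(List.prefix_append p [d]).trans hpre, ha⟩

lemma mem_leaves_child {σ0 σ2 : Type*} {T : BTree σ0 σ2} {p : List Bool}
    {f : σ2} {l r : BTree σ0 σ2} (hsub : subtreeAt T p = some (BTree.node f l r))
    (d : Bool) (u : List Bool) (a : σ0)
    (hu : subtreeAt (if d then r else l) u = some (BTree.leaf a)) :
    (p ++ [d]) ++ u ∈ LeavesBelow T (p ++ [d]) := by
  refine ⟨List.prefix_append _ _, a, ?_⟩
  rw [List.append_assoc, subtreeAt_append, hsub]
  simpa [subtreeAt] using hu

lemma leaves_split {σ0 σ2 : Type*} {T : BTree σ0 σ2} {p : List Bool}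
    {f : σ2} {l r : BTree σ0 σ2} (hsub : subtreeAt T p = some (BTree.node f l r)) :
    LeavesBelow T p = LeavesBelow T (p ++ [false]) ∪ LeavesBelow T (p ++ [true]) := by
  apply Set.Subset.antisymm
  · rintro w ⟨⟨u, rfl⟩, a, ha⟩
    cases u with
    | nil => rw [List.append_nil, hsub] at ha; simp at ha
    | cons d ds =>
      have hpre : p ++ [d] <+: p ++ d :: ds := ⟨ds, by simp⟩
      cases d
      · exact Or.inl ⟨hpre, a, ha⟩
      · exact Or.inr ⟨hpre, a, ha⟩
  · exact Set.union_subset (leaves_child_subset T p false) (leaves_child_subset T p true)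

lemma subtree_child {σ0 σ2 : Type*} {T : BTree σ0 σ2} {p : List Bool}
    {f : σ2} {l r : BTree σ0 σ2} (hsub : subtreeAt T p = some (BTree.node f l r))
    (d : Bool) : subtreeAt T (p ++ [d]) = some (if d then r else l) := by
  rw [subtreeAt_append, hsub]; simp [subtreeAt]

/-- `run` only depends on the selection restricted to the leaves below. -/
lemma run_inter {σ0 σ2 Q : Type*} (δ0 : σ0 → Bool → Q) (δ2 : Q → Q → σ2 → Q)
    {T : BTree σ0 σ2} {p : List Bool} {f : σ2} {l r : BTree σ0 σ2}
    (hsub : subtreeAt T p = some (BTree.node f l r)) (d : Bool) (S : Set (List Bool)) :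
    run δ0 δ2 (S ∩ LeavesBelow T (p ++ [d])) (if d then r else l) (p ++ [d]) =
      run δ0 δ2 S (if d then r else l) (p ++ [d]) := by
  apply run_congr
  intro u a hu
  have hm : p ++ [d] ++ u ∈ LeavesBelow T (p ++ [d]) := mem_leaves_child hsub d u a hu
  exact ⟨fun h => h.1, fun h => ⟨h, hm⟩⟩

/-- for a useful configuration `(v,q)` at an internal vertex `v` with
children `v₁`, `v₂` and label `f`, the set `S^u(v,q)` is the disjoint union over state
pairs `(q₁,q₂)` with `δ₂(q₁,q₂,f) = q` and `(v₁,q₁)`, `(v₂,q₂)` active of the sets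
`{B₁ ∪ B₂ : B₁ ∈ S^a(v₁,q₁), B₂ ∈ S^a(v₂,q₂)}`; moreover each such `B₁ ∪ B₂`
determines `B₁` and `B₂` uniquely by intersecting with the leaves of the subtrees. -/
theorem stmt9 {σ0 σ2 Q : Type*} (δ0 : σ0 → Bool → Q) (δ2 : Q → Q → σ2 → Q)
    (T : BTree σ0 σ2) (p : List Bool) (q : Q) (f : σ2) (l r : BTree σ0 σ2)
    (hsub : subtreeAt T p = some (BTree.node f l r))
    (huse : ConfU δ0 δ2 T p q) :
    (∀ S, S ∈ Su δ0 δ2 T p q ↔ ∃ q₁ q₂, δ2 q₁ q₂ f = q ∧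
        (S ∩ LeavesBelow T (p ++ [false])) ∈ Sa δ0 δ2 T (p ++ [false]) q₁ ∧
        (S ∩ LeavesBelow T (p ++ [true])) ∈ Sa δ0 δ2 T (p ++ [true]) q₂ ∧
        S = (S ∩ LeavesBelow T (p ++ [false])) ∪ (S ∩ LeavesBelow T (p ++ [true]))) ∧
    (∀ q₁ q₂ q₁' q₂' B₁ B₂ B₁' B₂',
        δ2 q₁ q₂ f = q → δ2 q₁' q₂' f = q → (q₁, q₂) ≠ (q₁', q₂') →
        B₁ ∈ Sa δ0 δ2 T (p ++ [false]) q₁ → B₂ ∈ Sa δ0 δ2 T (p ++ [true]) q₂ →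
        B₁' ∈ Sa δ0 δ2 T (p ++ [false]) q₁' → B₂' ∈ Sa δ0 δ2 T (p ++ [true]) q₂' →
        B₁ ∪ B₂ ≠ B₁' ∪ B₂') ∧
    (∀ q₁ q₂ B₁ B₂,
        B₁ ∈ Sa δ0 δ2 T (p ++ [false]) q₁ → B₂ ∈ Sa δ0 δ2 T (p ++ [true]) q₂ →
        (B₁ ∪ B₂) ∩ LeavesBelow T (p ++ [false]) = B₁ ∧
        (B₁ ∪ B₂) ∩ LeavesBelow T (p ++ [true]) = B₂) := by
  have hsubl : subtreeAt T (p ++ [false]) = some l := by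
    simpa using subtree_child hsub false
  have hsubr : subtreeAt T (p ++ [true]) = some r := by
    simpa using subtree_child hsub true
  have hdisj := leaves_disj T p
  -- part 3 first
  have part3 : ∀ q₁ q₂ B₁ B₂,
      B₁ ∈ Sa δ0 δ2 T (p ++ [false]) q₁ → B₂ ∈ Sa δ0 δ2 T (p ++ [true]) q₂ →
      (B₁ ∪ B₂) ∩ LeavesBelow T (p ++ [false]) = B₁ ∧
      (B₁ ∪ B₂) ∩ LeavesBelow T (p ++ [true]) = B₂ := by
    intro q₁ q₂ B₁ B₂ h₁ h₂
    obtain ⟨-, hB₁, -⟩ := h₁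
    obtain ⟨-, hB₂, -⟩ := h₂
    constructor
    · apply Set.Subset.antisymm
      · rintro x ⟨hx, hxl⟩
        rcases hx with hx | hx
        · exact hx
        · exact absurd (Set.mem_inter hxl (hB₂ hx)) (by rw [hdisj]; exact Set.notMem_empty x)
      · intro x hx; exact ⟨Or.inl hx, hB₁ hx⟩
    · apply Set.Subset.antisymm
      · rintro x ⟨hx, hxr⟩
        rcases hx with hx | hx
        · exact absurd (Set.mem_inter (hB₁ hx) hxr) (by rw [hdisj]; exact Set.notMem_empty x)
        · exact hx
      · intro x hx; exact ⟨Or.inr hx, hB₂ hx⟩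
  refine ⟨?_, ?_, part3⟩
  · intro S
    constructor
    · rintro ⟨⟨hne, hSsub, t, ht, hrun⟩, hhit⟩
      rw [hsub] at ht
      obtain rfl : t = BTree.node f l r := (Option.some_inj.mp ht).symm
      have hrl : run δ0 δ2 (S ∩ LeavesBelow T (p ++ [false])) l (p ++ [false]) =
          run δ0 δ2 S l (p ++ [false]) := by
        simpa using run_inter δ0 δ2 hsub false S
      have hrr : run δ0 δ2 (S ∩ LeavesBelow T (p ++ [true])) r (p ++ [true]) =
          run δ0 δ2 S r (p ++ [true]) := by
        simpa using run_inter δ0 δ2 hsub true S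
      refine ⟨run δ0 δ2 (S ∩ LeavesBelow T (p ++ [false])) l (p ++ [false]),
        run δ0 δ2 (S ∩ LeavesBelow T (p ++ [true])) r (p ++ [true]), ?_, ?_, ?_, ?_⟩
      · rw [hrl, hrr, ← hrun]; simp [run]
      · exact ⟨hhit false (by rw [hsubl]; rfl), Set.inter_subset_right, l, hsubl, rfl⟩
      · exact ⟨hhit true (by rw [hsubr]; rfl), Set.inter_subset_right, r, hsubr, rfl⟩
      · rw [← Set.inter_union_distrib_left, ← leaves_split hsub,
          Set.inter_eq_left.mpr hSsub]
    · rintro ⟨q₁, q₂, hq, h₁, h₂, hS⟩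
      obtain ⟨hne₁, hB₁, t₁, ht₁, hrun₁⟩ := h₁
      obtain ⟨hne₂, hB₂, t₂, ht₂, hrun₂⟩ := h₂
      rw [hsubl] at ht₁; rw [hsubr] at ht₂
      obtain rfl : l = t₁ := Option.some_inj.mp ht₁
      obtain rfl : r = t₂ := Option.some_inj.mp ht₂
      have hrl : run δ0 δ2 (S ∩ LeavesBelow T (p ++ [false])) l (p ++ [false]) =
          run δ0 δ2 S l (p ++ [false]) := by
        simpa using run_inter δ0 δ2 hsub false S
      have hrr : run δ0 δ2 (S ∩ LeavesBelow T (p ++ [true])) r (p ++ [true]) =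
          run δ0 δ2 S r (p ++ [true]) := by
        simpa using run_inter δ0 δ2 hsub true S
      refine ⟨⟨?_, ?_, BTree.node f l r, hsub, ?_⟩, ?_⟩
      · obtain ⟨x, hx⟩ := hne₁
        exact ⟨x, by rw [hS]; exact Or.inl hx⟩
      · rw [hS, leaves_split hsub]
        exact Set.union_subset
          (Set.inter_subset_right.trans Set.subset_union_left)
          (Set.inter_subset_right.trans Set.subset_union_right)
      · simp only [run]
        rw [← hrl, ← hrr, hrun₁, hrun₂, hq]
      · intro d _
        cases d
        · exact hne₁
        · exact hne₂
  · intro q₁ q₂ q₁' q₂' B₁ B₂ B₁' B₂' hq hq' hne h₁ h₂ h₁' h₂' heq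
    apply hne
    obtain ⟨e₁, e₂⟩ := part3 q₁ q₂ B₁ B₂ h₁ h₂
    obtain ⟨e₁', e₂'⟩ := part3 q₁' q₂' B₁' B₂' h₁' h₂'
    have hB₁ : B₁ = B₁' := by rw [← e₁, ← e₁', heq]
    have hB₂ : B₂ = B₂' := by rw [← e₂, ← e₂', heq]
    obtain ⟨-, -, t₁, ht₁, hrun₁⟩ := h₁
    obtain ⟨-, -, t₂, ht₂, hrun₂⟩ := h₂
    obtain ⟨-, -, t₁', ht₁', hrun₁'⟩ := h₁'
    obtain ⟨-, -, t₂', ht₂', hrun₂'⟩ := h₂'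
    rw [ht₁] at ht₁'; rw [ht₂] at ht₂'
    obtain rfl : t₁ = t₁' := Option.some_inj.mp ht₁'
    obtain rfl : t₂ = t₂' := Option.some_inj.mp ht₂'
    rw [← hrun₁, ← hrun₂, ← hrun₁', ← hrun₂', hB₁, hB₂]
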